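/- arXiv:1710.09562 — 6 statements merged into one kernel-verified Lean document; each statement's English description precedes it below -/
import Mathlib

section
/- For each i ∈ {1,…,m}, let {φ_{ij}}_{j∈ℕ} be a K-frame for H with K-frame bounds A_i and B_i. Suppose there exists A > 0 such that for every partition σ = {σ_i}_{i=1}^m of ℕ there exists a bounded linear operator M_σ : ℓ²(ℕ) → H satisfying M_σ(e_j) = φ_{ij} for every j ∈ σ_i and every i ∈ {1,…,m}, and A·KK* ≤ M_σ M_σ* (i.e. A‖K* f‖² ≤ ‖M_σ* f‖² for all f ∈ H), where {e_j}_{j∈ℕ} is the canonical orthonormal basis of ℓ²(ℕ). Then the family {φ_{ij}}_{j∈ℕ} (i = 1,…,m) is K-woven, with universal lower bound A and universal upper bound ∑_{i=1}^m B_i. -/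
/-!
Each piece of a weaving is a sub-sum of a frame sum, which gives the upper bound `∑ Bᵢ`.
For the lower bound, the `j`-th coordinate of `M_σ* f ∈ ℓ²` is `⟨M_σ e_j, f⟩ = ⟨φ_ij, f⟩` for
`j ∈ σ_i`, so splitting `‖M_σ* f‖² = ∑ⱼ |(M_σ* f)ⱼ|²` along the partition shows that it is exactly
the weaving sum, and `A ‖K* f‖² ≤ ‖M_σ* f‖²` is the hypothesis.
-/

local notation "⟪" x ", " y "⟫" => @inner ℂ _ _ x y

noncomputable section

variable {H : Type} [NormedAddCommGroup H] [InnerProductSpace ℂ H] [CompleteSpace H]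

def IsKFrameWith (K : H →L[ℂ] H) (φ : ℕ → H) (A B : ℝ) : Prop :=
  0 < A ∧ 0 < B ∧ ∀ f : H,
    Summable (fun j : ℕ => ‖⟪f, φ j⟫‖ ^ 2) ∧
    A * ‖ContinuousLinearMap.adjoint K f‖ ^ 2 ≤ ∑' j : ℕ, ‖⟪f, φ j⟫‖ ^ 2 ∧
    ∑' j : ℕ, ‖⟪f, φ j⟫‖ ^ 2 ≤ B * ‖f‖ ^ 2

theorem hasSum_sum_tsum_of_disjoint_cover {α β ι : Type*} [AddCommMonoid α] [TopologicalSpace α]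
    [ContinuousAdd α] [Fintype ι] {f : β → α} {σ : ι → Set β}
    (hdisj : Pairwise (Function.onFun Disjoint σ)) (hcover : ⋃ i, σ i = Set.univ)
    (hf : ∀ i, Summable (fun j : σ i => f j)) :
    HasSum f (∑ i, ∑' j : σ i, f j) := by
  have hunion := hasSum_sum_disjoint (f := f) Finset.univ (fun i _ k _ hik => hdisj hik)
    fun i _ => (hf i).hasSum
  refine (hasSum_subtype_iff_of_support_subset fun j _ => ?_).mp hunion
  simpa only [Finset.mem_univ, Set.iUnion_true, hcover] using Set.mem_univ j

theorem lp.hasSum_norm_sq {ι : Type*} {G : ι → Type*} [∀ i, NormedAddCommGroup (G i)]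
    (x : lp G 2) : HasSum (fun j => ‖x j‖ ^ 2) (‖x‖ ^ 2) := by
  simpa only [ENNReal.toReal_ofNat, Real.rpow_two] using lp.hasSum_norm (p := 2) (by norm_num) x

theorem lp.adjoint_apply_eq_inner_single {ι 𝕜 E : Type*} [RCLike 𝕜] [DecidableEq ι]
    [NormedAddCommGroup E] [InnerProductSpace 𝕜 E] [CompleteSpace E]
    (M : lp (fun _ : ι => 𝕜) 2 →L[𝕜] E) (f : E) (j : ι) :
    ContinuousLinearMap.adjoint M f j = inner 𝕜 (M (lp.single 2 j 1)) f := by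
  rw [← ContinuousLinearMap.adjoint_inner_right, lp.inner_single_left]
  simp

theorem norm_adjoint_sq_eq_sum_tsum {ι : Type*} [Fintype ι] (φ : ι → ℕ → H) {σ : ι → Set ℕ}
    (hdisj : Pairwise (Function.onFun Disjoint σ)) (hcover : ⋃ i, σ i = Set.univ)
    (M : lp (fun _ : ℕ => ℂ) 2 →L[ℂ] H)
    (hMφ : ∀ i, ∀ j ∈ σ i, M (lp.single 2 j (1 : ℂ)) = φ i j) (f : H) :
    ‖ContinuousLinearMap.adjoint M f‖ ^ 2 = ∑ i, ∑' j : σ i, ‖⟪f, φ i (j : ℕ)⟫‖ ^ 2 := by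
  have hcoeff := lp.hasSum_norm_sq (ContinuousLinearMap.adjoint M f)
  rw [hcoeff.unique (hasSum_sum_tsum_of_disjoint_cover hdisj hcover
    fun i => hcoeff.summable.subtype (σ i))]
  refine Finset.sum_congr rfl fun i _ => tsum_congr fun j => ?_
  rw [lp.adjoint_apply_eq_inner_single, hMφ i j j.2, norm_inner_symm]

theorem stmt2_general
    (m : ℕ) (K : H →L[ℂ] H) (φ : Fin m → ℕ → H) (A' B : Fin m → ℝ)
    (hframe : ∀ i, IsKFrameWith K (φ i) (A' i) (B i))
    (A : ℝ)
    (hM : ∀ σ : Fin m → Set ℕ,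
      Pairwise (Function.onFun Disjoint σ) → (⋃ i, σ i) = Set.univ →
      ∃ M : lp (fun _ : ℕ => ℂ) 2 →L[ℂ] H,
        (∀ i : Fin m, ∀ j ∈ σ i, M (lp.single 2 j (1 : ℂ)) = φ i j) ∧
        ∀ f : H,
          A * ‖ContinuousLinearMap.adjoint K f‖ ^ 2 ≤
            ‖ContinuousLinearMap.adjoint M f‖ ^ 2) :
    ∀ σ : Fin m → Set ℕ,
      Pairwise (Function.onFun Disjoint σ) → (⋃ i, σ i) = Set.univ →
      ∀ f : H,
        (∀ i, Summable (fun j : σ i => ‖⟪f, φ i (j : ℕ)⟫‖ ^ 2)) ∧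
        A * ‖ContinuousLinearMap.adjoint K f‖ ^ 2 ≤
          ∑ i : Fin m, ∑' j : σ i, ‖⟪f, φ i (j : ℕ)⟫‖ ^ 2 ∧
        ∑ i : Fin m, ∑' j : σ i, ‖⟪f, φ i (j : ℕ)⟫‖ ^ 2 ≤ (∑ i : Fin m, B i) * ‖f‖ ^ 2 := by
  intro σ hdisj hcover f
  have hsummable i := ((hframe i).2.2 f).1
  refine ⟨fun i => (hsummable i).subtype (σ i), ?_, ?_⟩
  · obtain ⟨M, hMφ, hMK⟩ := hM σ hdisj hcover
    exact (hMK f).trans (norm_adjoint_sq_eq_sum_tsum φ hdisj hcover M hMφ f).le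
  · rw [Finset.sum_mul]
    refine Finset.sum_le_sum fun i _ => ?_
    exact ((hsummable i).tsum_subtype_le _ (σ i) fun _ => by positivity).trans
      ((hframe i).2.2 f).2.2

theorem stmt2 [TopologicalSpace.SeparableSpace H]
    (m : ℕ) (K : H →L[ℂ] H) (φ : Fin m → ℕ → H) (A' B : Fin m → ℝ)
    (hframe : ∀ i, IsKFrameWith K (φ i) (A' i) (B i))
    (A : ℝ) (hA : 0 < A)
    (hM : ∀ σ : Fin m → Set ℕ,
      Pairwise (Function.onFun Disjoint σ) → (⋃ i, σ i) = Set.univ →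
      ∃ M : lp (fun _ : ℕ => ℂ) 2 →L[ℂ] H,
        (∀ i : Fin m, ∀ j ∈ σ i, M (lp.single 2 j (1 : ℂ)) = φ i j) ∧
        ∀ f : H,
          A * ‖ContinuousLinearMap.adjoint K f‖ ^ 2 ≤
            ‖ContinuousLinearMap.adjoint M f‖ ^ 2) :
    ∀ σ : Fin m → Set ℕ,
      Pairwise (Function.onFun Disjoint σ) → (⋃ i, σ i) = Set.univ →
      ∀ f : H,
        (∀ i, Summable (fun j : σ i => ‖⟪f, φ i (j : ℕ)⟫‖ ^ 2)) ∧
        A * ‖ContinuousLinearMap.adjoint K f‖ ^ 2 ≤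
          ∑ i : Fin m, ∑' j : σ i, ‖⟪f, φ i (j : ℕ)⟫‖ ^ 2 ∧
        ∑ i : Fin m, ∑' j : σ i, ‖⟪f, φ i (j : ℕ)⟫‖ ^ 2 ≤ (∑ i : Fin m, B i) * ‖f‖ ^ 2 :=
  stmt2_general m K φ A' B hframe A hM
end
end

section
/- For each i ∈ {1,…,m}, let {φ_{ij}}_{j∈ℕ} be a K-frame for H. Assume that for every finite subset F ⊆ ℕ, every partition {τ_i}_{i=1}^m of F, and every A > 0, there exists a partition {σ_i}_{i=1}^m of ℕ ∖ F such that the family ⋃_{i=1}^m {φ_{ij}}_{j∈σ_i∪τ_i} fails to admit A as a lower K-frame bound, i.e. there exists h ∈ H with ∑_{i=1}^m ∑_{j∈σ_i∪τ_i} |⟨h, φ_{ij}⟩|² < A‖K* h‖². Then there exists a partition {π_i}_{i=1}^m of ℕ such that the weaving ⋃_{i=1}^m {φ_{ij}}_{j∈π_i} is not a K-frame for H. -/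
/-!
The partition `π` is built in finite stages. Given a partition `τ` of a finite set `F`, the
hypothesis with `A = 1/(n+1)` yields a completion `σ` of `τ` and a vector `h` whose weaving sum
falls below `A‖K* h‖²`. The frame sums at `h` converge, so outside a large enough finite
`G ⊇ F ∪ {n}` their tails are smaller than the gap; hence every partition of `ℕ` that agrees
with `σ ∪ τ` on `G` still violates the lower bound `A` at `h`. The union of the nested stages is
a partition of `ℕ` extending all of them, so it admits no positive lower `K`-frame bound.
-/

local notation "⟪" x ", " y "⟫" => @inner ℂ _ _ x y

noncomputable section

variable {H : Type} [NormedAddCommGroup H] [InnerProductSpace ℂ H] [CompleteSpace H]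

open Function Filter Topology

section IndexedPartition

variable {ι α : Type*}

def IsIndexedPartitionOf (τ : ι → Set α) (S : Set α) : Prop :=
  Pairwise (Disjoint on τ) ∧ ⋃ i, τ i = S

namespace IsIndexedPartitionOf

variable {σ τ : ι → Set α} {S T : Set α}

theorem union (hσ : IsIndexedPartitionOf σ S) (hτ : IsIndexedPartitionOf τ T)
    (hST : Disjoint S T) : IsIndexedPartitionOf (fun i => σ i ∪ τ i) (S ∪ T) := by
  refine ⟨fun i j hij => ?_, by rw [Set.iUnion_union_distrib, hσ.2, hτ.2]⟩
  have hσS : ∀ k, σ k ⊆ S := fun k => hσ.2 ▸ Set.subset_iUnion σ k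
  have hτT : ∀ k, τ k ⊆ T := fun k => hτ.2 ▸ Set.subset_iUnion τ k
  rw [onFun, Set.disjoint_union_left, Set.disjoint_union_right, Set.disjoint_union_right]
  exact ⟨⟨hσ.1 hij, hST.mono (hσS i) (hτT j)⟩, hST.symm.mono (hτT i) (hσS j), hτ.1 hij⟩

theorem inter (hτ : IsIndexedPartitionOf τ S) (G : Set α) :
    IsIndexedPartitionOf (fun i => τ i ∩ G) (S ∩ G) :=
  ⟨fun _ _ hij => (hτ.1 hij).mono Set.inter_subset_left Set.inter_subset_left,
    by rw [← Set.iUnion_inter, hτ.2]⟩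

end IsIndexedPartitionOf

section Monotone

variable {τ : ℕ → ι → Set α} (hmono : Monotone τ) (hdisj : ∀ n, Pairwise (Disjoint on τ n))
include hmono hdisj

theorem eq_of_mem_of_mem_of_monotone {x : α} {k l : ℕ} {i j : ι} (hi : x ∈ τ k i)
    (hj : x ∈ τ l j) : i = j := by
  by_contra hij
  exact Set.disjoint_left.mp (hdisj (max k l) hij) (hmono (le_max_left k l) i hi)
    (hmono (le_max_right k l) j hj)

theorem pairwise_disjoint_iUnion_of_monotone : Pairwise (Disjoint on fun i => ⋃ n, τ n i) := by
  intro i j hij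
  simp only [onFun, Set.disjoint_iUnion_left, Set.disjoint_iUnion_right]
  exact fun k l => Set.disjoint_left.mpr fun _ hi hj =>
    hij (eq_of_mem_of_mem_of_monotone hmono hdisj hi hj)

theorem iUnion_inter_iUnion_subset_of_monotone (n : ℕ) (i : ι) :
    (⋃ k, τ k i) ∩ (⋃ j, τ n j) ⊆ τ n i := by
  rintro x ⟨hx, hxn⟩
  obtain ⟨k, hk⟩ := Set.mem_iUnion.mp hx
  obtain ⟨j, hj⟩ := Set.mem_iUnion.mp hxn
  obtain rfl := eq_of_mem_of_mem_of_monotone hmono hdisj hk hj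
  exact hj

end Monotone

end IndexedPartition

theorem exists_seq_of_forall_exists_step {β : Type*} {P : β → Prop} {R : ℕ → β → β → Prop}
    {b : β} (hb : P b) (step : ∀ n b, P b → ∃ c, P c ∧ R n b c) :
    ∃ s : ℕ → β, ∀ n, P (s n) ∧ R n (s n) (s (n + 1)) := by
  choose next hnextP hnextR using step
  let s : ℕ → {b // P b} := fun n =>
    Nat.rec ⟨b, hb⟩ (fun n c => ⟨next n c c.2, hnextP n c c.2⟩) n
  exact ⟨fun n => (s n).1, fun n => ⟨(s n).2, hnextR n (s n).1 (s n).2⟩⟩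

section Weaving

variable {E : Type*} [NormedAddCommGroup E] [InnerProductSpace ℂ E] {ι α : Type*} [Fintype ι]

def weavingSum (φ : ι → α → E) (π : ι → Set α) (f : E) : ℝ :=
  ∑ i, ∑' j : π i, ‖⟪f, φ i j⟫‖ ^ 2

theorem tsum_subtype_le_add_tsum_compl {f : α → ℝ} (hf : Summable f) (hf0 : 0 ≤ f)
    {s t G : Set α} (hst : s ∩ G ⊆ t) :
    ∑' j : s, f j ≤ ∑' j : t, f j + ∑' j : (Gᶜ : Set α), f j := by
  rw [tsum_subtype, tsum_subtype, tsum_subtype,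
    ← Summable.tsum_add (hf.indicator _) (hf.indicator _)]
  refine Summable.tsum_le_tsum (fun j => ?_) (hf.indicator _)
    ((hf.indicator _).add (hf.indicator _))
  have ht0 := Set.indicator_nonneg (fun j _ => hf0 j) (s := t) j
  have hG0 := Set.indicator_nonneg (fun j _ => hf0 j) (s := Gᶜ) j
  by_cases hs : j ∈ s
  · by_cases hG : j ∈ G
    · rw [Set.indicator_of_mem hs, Set.indicator_of_mem (hst ⟨hs, hG⟩)]
      linarith
    · rw [Set.indicator_of_mem hs, Set.indicator_of_mem (Set.mem_compl hG)]
      linarith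
  · rw [Set.indicator_of_notMem hs]
    positivity

theorem weavingSum_le_add_weavingSum_compl {φ : ι → α → E} {f : E}
    (hφ : ∀ i, Summable fun j => ‖⟪f, φ i j⟫‖ ^ 2) {π ρ : ι → Set α} {G : Set α}
    (hπ : ∀ i, π i ∩ G ⊆ ρ i) :
    weavingSum φ π f ≤ weavingSum φ ρ f + weavingSum φ (fun _ => Gᶜ) f := by
  rw [weavingSum, weavingSum, weavingSum, ← Finset.sum_add_distrib]
  exact Finset.sum_le_sum fun i _ =>
    tsum_subtype_le_add_tsum_compl (hφ i) (fun _ => sq_nonneg _) (hπ i)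

theorem tendsto_weavingSum_compl (φ : ι → α → E) (f : E) :
    Tendsto (fun G : Finset α => weavingSum φ (fun _ => (G : Set α)ᶜ) f) atTop (𝓝 0) := by
  have := tendsto_finsetSum Finset.univ fun i _ =>
    tendsto_tsum_compl_atTop_zero fun j => ‖⟪f, φ i j⟫‖ ^ 2
  rwa [Finset.sum_const_zero] at this

theorem exists_extension_weavingSum_lt [CompleteSpace E] {K : E →L[ℂ] E} {φ : ι → ℕ → E}
    (hφ : ∀ i f, Summable fun j => ‖⟪f, φ i j⟫‖ ^ 2)
    (hyp : ∀ F : Finset ℕ, ∀ τ : ι → Set ℕ, Pairwise (Disjoint on τ) → ⋃ i, τ i = (F : Set ℕ) →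
      ∀ A : ℝ, 0 < A → ∃ σ : ι → Set ℕ, Pairwise (Disjoint on σ) ∧ ⋃ i, σ i = (F : Set ℕ)ᶜ ∧
        ∃ h : E, weavingSum φ (fun i => σ i ∪ τ i) h < A * ‖K.adjoint h‖ ^ 2)
    {τ : ι → Set ℕ} (hτ : ∃ F : Finset ℕ, IsIndexedPartitionOf τ F) (n : ℕ) {A : ℝ}
    (hA : 0 < A) :
    ∃ τ' : ι → Set ℕ, (∃ G : Finset ℕ, IsIndexedPartitionOf τ' G) ∧ τ ≤ τ' ∧ n ∈ ⋃ i, τ' i ∧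
      ∃ h : E, ∀ π : ι → Set ℕ, (∀ i, π i ∩ ⋃ j, τ' j ⊆ τ' i) →
        weavingSum φ π h < A * ‖K.adjoint h‖ ^ 2 := by
  obtain ⟨F, hτF⟩ := hτ
  obtain ⟨σ, hσd, hσc, h, hlt⟩ := hyp F τ hτF.1 hτF.2 A hA
  obtain ⟨G₀, hG₀⟩ := eventually_atTop.mp
    ((tendsto_weavingSum_compl φ h).eventually_lt_const (sub_pos.2 hlt))
  set G : Finset ℕ := G₀ ∪ F ∪ {n}
  have hpart : IsIndexedPartitionOf (fun i => (σ i ∪ τ i) ∩ G) G := by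
    simpa only [Set.compl_union_self, Set.univ_inter] using
      (IsIndexedPartitionOf.union ⟨hσd, hσc⟩ hτF disjoint_compl_left).inter G
  refine ⟨_, ⟨G, hpart⟩, fun i x hx => ⟨Or.inr hx, ?_⟩, ?_, h, fun π hπ => ?_⟩
  · have hxF : x ∈ (F : Set ℕ) := hτF.2 ▸ Set.mem_iUnion_of_mem i hx
    simp [G, Finset.mem_coe.mp hxF]
  · exact (Set.ext_iff.mp hpart.2 n).mpr (by simp [G])
  · rw [hpart.2] at hπ
    have htail := hG₀ G (Finset.subset_union_left.trans Finset.subset_union_left)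
    have hle := weavingSum_le_add_weavingSum_compl (hφ · h)
      fun i => (hπ i).trans Set.inter_subset_left
    linarith

end Weaving

theorem stmt3_general
    (m : ℕ) (K : H →L[ℂ] H) (φ : Fin m → ℕ → H)
    (hframe : ∀ i, ∃ A B : ℝ, IsKFrameWith K (φ i) A B)
    (hyp : ∀ F : Finset ℕ, ∀ τ : Fin m → Set ℕ,
      Pairwise (Function.onFun Disjoint τ) → (⋃ i, τ i) = (F : Set ℕ) →
      ∀ A : ℝ, 0 < A →
        ∃ σ : Fin m → Set ℕ,
          Pairwise (Function.onFun Disjoint σ) ∧ (⋃ i, σ i) = ((F : Set ℕ))ᶜ ∧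
          ∃ h : H,
            ∑ i : Fin m, ∑' j : (σ i ∪ τ i : Set ℕ), ‖⟪h, φ i (j : ℕ)⟫‖ ^ 2 <
              A * ‖ContinuousLinearMap.adjoint K h‖ ^ 2) :
    ∃ π : Fin m → Set ℕ,
      Pairwise (Function.onFun Disjoint π) ∧ (⋃ i, π i) = Set.univ ∧
      ¬ ∃ A B : ℝ, 0 < A ∧ 0 < B ∧ ∀ f : H,
          (∀ i, Summable (fun j : π i => ‖⟪f, φ i (j : ℕ)⟫‖ ^ 2)) ∧
          A * ‖ContinuousLinearMap.adjoint K f‖ ^ 2 ≤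
            ∑ i : Fin m, ∑' j : π i, ‖⟪f, φ i (j : ℕ)⟫‖ ^ 2 ∧
          ∑ i : Fin m, ∑' j : π i, ‖⟪f, φ i (j : ℕ)⟫‖ ^ 2 ≤ B * ‖f‖ ^ 2 := by
  have hφ : ∀ i f, Summable fun j => ‖⟪f, φ i j⟫‖ ^ 2 := fun i f =>
    let ⟨_, _, _, _, hA⟩ := hframe i
    (hA f).1
  obtain ⟨τ, hτ⟩ := exists_seq_of_forall_exists_step
    (P := fun τ : Fin m → Set ℕ => ∃ F : Finset ℕ, IsIndexedPartitionOf τ F)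
    ⟨∅, fun _ _ _ => Set.empty_disjoint _, by simp⟩
    fun n τ hτ => exists_extension_weavingSum_lt hφ hyp hτ n (Nat.one_div_pos_of_nat (n := n))
  choose hpart hle hcover hsmall using hτ
  have hmono : Monotone τ := monotone_nat_of_le_succ hle
  have hdisj : ∀ n, Pairwise (Disjoint on τ n) := fun n => (hpart n).choose_spec.1
  refine ⟨fun i => ⋃ n, τ n i, pairwise_disjoint_iUnion_of_monotone hmono hdisj,
    Set.eq_univ_of_forall fun x => ?_, ?_⟩
  · obtain ⟨i, hi⟩ := Set.mem_iUnion.mp (hcover x)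
    exact Set.mem_iUnion_of_mem i (Set.mem_iUnion_of_mem (x + 1) hi)
  · rintro ⟨A, B, hA, -, hbound⟩
    obtain ⟨n, hn⟩ := exists_nat_one_div_lt hA
    obtain ⟨h, hh⟩ := hsmall n
    have hlt := hh _ (iUnion_inter_iUnion_subset_of_monotone hmono hdisj (n + 1))
    have hlow : A * ‖K.adjoint h‖ ^ 2 ≤ weavingSum φ (fun i => ⋃ n, τ n i) h := (hbound h).2.1
    linarith [mul_le_mul_of_nonneg_right hn.le (sq_nonneg ‖K.adjoint h‖)]

theorem stmt3 [TopologicalSpace.SeparableSpace H]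
    (m : ℕ) (K : H →L[ℂ] H) (φ : Fin m → ℕ → H)
    (hframe : ∀ i, ∃ A B : ℝ, IsKFrameWith K (φ i) A B)
    (hyp : ∀ F : Finset ℕ, ∀ τ : Fin m → Set ℕ,
      Pairwise (Function.onFun Disjoint τ) → (⋃ i, τ i) = (F : Set ℕ) →
      ∀ A : ℝ, 0 < A →
        ∃ σ : Fin m → Set ℕ,
          Pairwise (Function.onFun Disjoint σ) ∧ (⋃ i, σ i) = ((F : Set ℕ))ᶜ ∧
          ∃ h : H,
            ∑ i : Fin m, ∑' j : (σ i ∪ τ i : Set ℕ), ‖⟪h, φ i (j : ℕ)⟫‖ ^ 2 <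
              A * ‖ContinuousLinearMap.adjoint K h‖ ^ 2) :
    ∃ π : Fin m → Set ℕ,
      Pairwise (Function.onFun Disjoint π) ∧ (⋃ i, π i) = Set.univ ∧
      ¬ ∃ A B : ℝ, 0 < A ∧ 0 < B ∧ ∀ f : H,
          (∀ i, Summable (fun j : π i => ‖⟪f, φ i (j : ℕ)⟫‖ ^ 2)) ∧
          A * ‖ContinuousLinearMap.adjoint K f‖ ^ 2 ≤
            ∑ i : Fin m, ∑' j : π i, ‖⟪f, φ i (j : ℕ)⟫‖ ^ 2 ∧
          ∑ i : Fin m, ∑' j : π i, ‖⟪f, φ i (j : ℕ)⟫‖ ^ 2 ≤ B * ‖f‖ ^ 2 :=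
  stmt3_general m K φ hframe hyp
end
end

section
/- Let {φ_{ij}}_{j∈ℕ} (i = 1,…,m) be a family of K-frames for H that is K-woven with universal K-frame bounds A and B. Then for every bounded linear operator U : H → H, the family {U(φ_{ij})}_{j∈ℕ} (i = 1,…,m) is UK-woven with universal bounds A and B‖U*‖²; that is, for every partition {σ_i}_{i=1}^m of ℕ and every f ∈ H, A‖(UK)* f‖² ≤ ∑_{i=1}^m ∑_{j∈σ_i} |⟨f, U(φ_{ij})⟩|² ≤ B‖U*‖²‖f‖². -/
/-!
Since `⟪f, U x⟫ = ⟪U† f, x⟫`, the weaving sums of `{U φ_{ij}}` at `f` are those of `{φ_{ij}}` at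
`U† f`, and `(U K)† f = K† (U† f)`.
-/

local notation "⟪" x ", " y "⟫" => @inner ℂ _ _ x y

noncomputable section

variable {H : Type} [NormedAddCommGroup H] [InnerProductSpace ℂ H] [CompleteSpace H]

theorem stmt7_general
    (m : ℕ) (K : H →L[ℂ] H) (φ : Fin m → ℕ → H)
    (A B : ℝ) (hB : 0 < B)
    -- the family is K-woven with universal bounds A and B
    (hwoven : ∀ σ : Fin m → Set ℕ,
      Pairwise (Function.onFun Disjoint σ) → (⋃ i, σ i) = Set.univ →
      ∀ f : H,
        (∀ i, Summable (fun j : σ i => ‖⟪f, φ i (j : ℕ)⟫‖ ^ 2)) ∧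
        A * ‖ContinuousLinearMap.adjoint K f‖ ^ 2 ≤
          ∑ i : Fin m, ∑' j : σ i, ‖⟪f, φ i (j : ℕ)⟫‖ ^ 2 ∧
        ∑ i : Fin m, ∑' j : σ i, ‖⟪f, φ i (j : ℕ)⟫‖ ^ 2 ≤ B * ‖f‖ ^ 2)
    (U : H →L[ℂ] H) :
    ∀ σ : Fin m → Set ℕ,
      Pairwise (Function.onFun Disjoint σ) → (⋃ i, σ i) = Set.univ →
      ∀ f : H,
        (∀ i, Summable (fun j : σ i => ‖⟪f, U (φ i (j : ℕ))⟫‖ ^ 2)) ∧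
        A * ‖ContinuousLinearMap.adjoint (U.comp K) f‖ ^ 2 ≤
          ∑ i : Fin m, ∑' j : σ i, ‖⟪f, U (φ i (j : ℕ))⟫‖ ^ 2 ∧
        ∑ i : Fin m, ∑' j : σ i, ‖⟪f, U (φ i (j : ℕ))⟫‖ ^ 2 ≤
          B * ‖ContinuousLinearMap.adjoint U‖ ^ 2 * ‖f‖ ^ 2 := by
  intro σ hdisj hcover f
  obtain ⟨hsum, hlower, hupper⟩ := hwoven σ hdisj hcover (U.adjoint f)
  simp only [ContinuousLinearMap.adjoint_inner_left] at hsum hlower hupper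
  refine ⟨hsum, ?_, hupper.trans ?_⟩
  · rwa [ContinuousLinearMap.adjoint_comp, ContinuousLinearMap.comp_apply]
  · calc B * ‖U.adjoint f‖ ^ 2 ≤ B * (‖U.adjoint‖ * ‖f‖) ^ 2 := by
          gcongr; exact U.adjoint.le_opNorm f
      _ = B * ‖U.adjoint‖ ^ 2 * ‖f‖ ^ 2 := by ring

theorem stmt7 [TopologicalSpace.SeparableSpace H]
    (m : ℕ) (K : H →L[ℂ] H) (φ : Fin m → ℕ → H)
    (hframe : ∀ i, ∃ A B : ℝ, IsKFrameWith K (φ i) A B)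
    (A B : ℝ) (hA : 0 < A) (hB : 0 < B)
    -- the family is K-woven with universal bounds A and B
    (hwoven : ∀ σ : Fin m → Set ℕ,
      Pairwise (Function.onFun Disjoint σ) → (⋃ i, σ i) = Set.univ →
      ∀ f : H,
        (∀ i, Summable (fun j : σ i => ‖⟪f, φ i (j : ℕ)⟫‖ ^ 2)) ∧
        A * ‖ContinuousLinearMap.adjoint K f‖ ^ 2 ≤
          ∑ i : Fin m, ∑' j : σ i, ‖⟪f, φ i (j : ℕ)⟫‖ ^ 2 ∧
        ∑ i : Fin m, ∑' j : σ i, ‖⟪f, φ i (j : ℕ)⟫‖ ^ 2 ≤ B * ‖f‖ ^ 2)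
    (U : H →L[ℂ] H) :
    ∀ σ : Fin m → Set ℕ,
      Pairwise (Function.onFun Disjoint σ) → (⋃ i, σ i) = Set.univ →
      ∀ f : H,
        (∀ i, Summable (fun j : σ i => ‖⟪f, U (φ i (j : ℕ))⟫‖ ^ 2)) ∧
        A * ‖ContinuousLinearMap.adjoint (U.comp K) f‖ ^ 2 ≤
          ∑ i : Fin m, ∑' j : σ i, ‖⟪f, U (φ i (j : ℕ))⟫‖ ^ 2 ∧
        ∑ i : Fin m, ∑' j : σ i, ‖⟪f, U (φ i (j : ℕ))⟫‖ ^ 2 ≤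
          B * ‖ContinuousLinearMap.adjoint U‖ ^ 2 * ‖f‖ ^ 2 :=
  stmt7_general m K φ A B hB hwoven U
end
end

section
/- Let {φ_{ij}}_{j∈ℕ} (i = 1,…,m) be a family of K-frames for H. Then the family is K-woven if and only if for every bounded linear operator U : H → H, the family {U(φ_{ij})}_{j∈ℕ} (i = 1,…,m) is UK-woven. -/
local notation "⟪" x ", " y "⟫" => @inner ℂ _ _ x y

noncomputable section

variable {H : Type} [NormedAddCommGroup H] [InnerProductSpace ℂ H] [CompleteSpace H]

/-- The family `φ : Fin m → ℕ → H` is `K`-woven: there are universal constants `A`, `B`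
such that every weaving along a partition of ℕ is a `K`-frame with bounds `A`, `B`. -/
def IsKWoven {m : ℕ} (K : H →L[ℂ] H) (φ : Fin m → ℕ → H) : Prop :=
  ∃ A B : ℝ, 0 < A ∧ 0 < B ∧
    ∀ σ : Fin m → Set ℕ,
      Pairwise (Function.onFun Disjoint σ) → (⋃ i, σ i) = Set.univ →
      ∀ f : H,
        (∀ i, Summable (fun j : σ i => ‖⟪f, φ i (j : ℕ)⟫‖ ^ 2)) ∧
        A * ‖ContinuousLinearMap.adjoint K f‖ ^ 2 ≤
          ∑ i : Fin m, ∑' j : σ i, ‖⟪f, φ i (j : ℕ)⟫‖ ^ 2 ∧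
        ∑ i : Fin m, ∑' j : σ i, ‖⟪f, φ i (j : ℕ)⟫‖ ^ 2 ≤ B * ‖f‖ ^ 2

open ContinuousLinearMap

theorem IsKWoven.comp {m : ℕ} {K : H →L[ℂ] H} {φ : Fin m → ℕ → H} (hφ : IsKWoven K φ)
    (U : H →L[ℂ] H) : IsKWoven (U.comp K) (fun i j => U (φ i j)) := by
  obtain ⟨A, B, hA, hB, hφ⟩ := hφ
  -- `+ 1` keeps the upper bound positive when `U = 0`
  refine ⟨A, B * (‖U‖ + 1) ^ 2, hA, by positivity, fun σ hσ hcov f => ?_⟩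
  -- the weaving of `U φ` tested against `f` is the weaving of `φ` tested against `U† f`
  obtain ⟨hsum, hlow, hup⟩ := hφ σ hσ hcov (adjoint U f)
  have hinner (i : Fin m) (j : ℕ) : ⟪f, U (φ i j)⟫ = ⟪adjoint U f, φ i j⟫ :=
    (adjoint_inner_left U (φ i j) f).symm
  have hadj : adjoint (U.comp K) f = adjoint K (adjoint U f) := by
    rw [adjoint_comp]; rfl
  have hUf : ‖adjoint U f‖ ≤ (‖U‖ + 1) * ‖f‖ :=
    calc ‖adjoint U f‖ ≤ ‖adjoint U‖ * ‖f‖ := (adjoint U).le_opNorm f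
      _ = ‖U‖ * ‖f‖ := by rw [adjoint.norm_map]
      _ ≤ (‖U‖ + 1) * ‖f‖ := by gcongr; linarith
  simp only [hinner, hadj]
  refine ⟨hsum, hlow, hup.trans ?_⟩
  calc B * ‖adjoint U f‖ ^ 2 ≤ B * ((‖U‖ + 1) * ‖f‖) ^ 2 := by gcongr
    _ = B * (‖U‖ + 1) ^ 2 * ‖f‖ ^ 2 := by ring

theorem stmt8_general
    (m : ℕ) (K : H →L[ℂ] H) (φ : Fin m → ℕ → H) :
    IsKWoven K φ ↔
      ∀ U : H →L[ℂ] H, IsKWoven (U.comp K) (fun i j => U (φ i j)) :=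
  ⟨fun hφ U => hφ.comp U, fun h => by simpa [one_def] using h 1⟩

theorem stmt8 [TopologicalSpace.SeparableSpace H]
    (m : ℕ) (K : H →L[ℂ] H) (φ : Fin m → ℕ → H)
    (hframe : ∀ i, ∃ A B : ℝ, IsKFrameWith K (φ i) A B) :
    IsKWoven K φ ↔
      ∀ U : H →L[ℂ] H, IsKWoven (U.comp K) (fun i j => U (φ i j)) :=
  stmt8_general m K φ
end
end

section
/- Let {φ_j}_{j∈ℕ} be a K-frame for H with lower K-frame bound A₁ whose vectors are pairwise orthogonal and satisfy ‖φ_j‖² > α > 0 for all j ∈ ℕ. Then for every f ∈ H, ‖∑_{j∈ℕ} ⟨f, φ_j⟩ φ_j‖ ≥ √(αA₁) ‖K* f‖. -/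
/-!
Write `c j = ⟪f, φ j⟫`. Since the `φ j` are pairwise orthogonal, Pythagoras gives
`‖∑ c j • φ j‖² = ∑ |c j|² ‖φ j‖² ≥ α ∑ |c j|² ≥ α A₁ ‖K* f‖²`. The series converges because
the upper frame bound, tested on `f = φ k`, yields `‖φ k‖⁴ = |⟪φ k, φ k⟫|² ≤ B₁ ‖φ k‖²`,
so `‖φ k‖² ≤ B₁` and `∑ |c j|² ‖φ j‖² ≤ B₁ ∑ |c j|²`.
-/

local notation "⟪" x ", " y "⟫" => @inner ℂ _ _ x y

noncomputable section

variable {H : Type} [NormedAddCommGroup H] [InnerProductSpace ℂ H] [CompleteSpace H]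

section InnerProductSpace

variable {𝕜 E ι : Type*} [RCLike 𝕜] [NormedAddCommGroup E] [InnerProductSpace 𝕜 E]

theorem norm_sq_le_of_tsum_norm_inner_sq_le {φ : ι → E} {B : ℝ} (hB : 0 ≤ B) (k : ι)
    (hs : Summable fun j => ‖inner 𝕜 (φ k) (φ j)‖ ^ 2)
    (hle : ∑' j, ‖inner 𝕜 (φ k) (φ j)‖ ^ 2 ≤ B * ‖φ k‖ ^ 2) :
    ‖φ k‖ ^ 2 ≤ B := by
  have hself : ‖inner 𝕜 (φ k) (φ k)‖ = ‖φ k‖ ^ 2 := by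
    rw [inner_self_eq_norm_sq_to_K, norm_pow, RCLike.norm_ofReal, abs_norm]
  have h : (‖φ k‖ ^ 2) ^ 2 ≤ B * ‖φ k‖ ^ 2 :=
    calc (‖φ k‖ ^ 2) ^ 2 = ‖inner 𝕜 (φ k) (φ k)‖ ^ 2 := by rw [hself]
      _ ≤ ∑' j, ‖inner 𝕜 (φ k) (φ j)‖ ^ 2 := hs.le_tsum k fun j _ => sq_nonneg _
      _ ≤ B * ‖φ k‖ ^ 2 := hle
  nlinarith [sq_nonneg ‖φ k‖]

variable [CompleteSpace E]

theorem OrthogonalFamily.hasSum_norm_sq_tsum {G : ι → Type*} [∀ i, NormedAddCommGroup (G i)]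
    [∀ i, InnerProductSpace 𝕜 (G i)] {V : ∀ i, G i →ₗᵢ[𝕜] E} (hV : OrthogonalFamily 𝕜 G V)
    (l : ∀ i, G i) (hl : Summable fun i => ‖l i‖ ^ 2) :
    HasSum (fun i => ‖l i‖ ^ 2) (‖∑' i, V i (l i)‖ ^ 2) := by
  have hsum : Summable fun i => V i (l i) := (hV.summable_iff_norm_sq_summable l).2 hl
  have hlim := (Filter.Tendsto.norm hsum.hasSum).pow 2
  simpa only [HasSum, hV.norm_sum] using hlim

theorem hasSum_norm_sq_of_pairwise_inner_eq_zero {v : ι → E}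
    (hv : Pairwise fun i j => inner 𝕜 (v i) (v j) = 0) (hs : Summable fun i => ‖v i‖ ^ 2) :
    HasSum (fun i => ‖v i‖ ^ 2) (‖∑' i, v i‖ ^ 2) := by
  have hV : OrthogonalFamily 𝕜 (fun i => Submodule.span 𝕜 {v i})
      fun i => (Submodule.span 𝕜 {v i}).subtypeₗᵢ := by
    refine orthogonalFamily_iff_pairwise.2 fun i j hij => Submodule.isOrtho_span.2 ?_
    rintro _ rfl _ rfl
    exact hv hij
  exact hV.hasSum_norm_sq_tsum (fun i => ⟨v i, Submodule.mem_span_singleton_self _⟩) hs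

theorem hasSum_norm_sq_tsum_smul_of_pairwise_inner_eq_zero {φ : ι → E} {B : ℝ}
    (horth : Pairwise fun i j => inner 𝕜 (φ i) (φ j) = 0) (hB : ∀ i, ‖φ i‖ ^ 2 ≤ B)
    {c : ι → 𝕜} (hc : Summable fun i => ‖c i‖ ^ 2) :
    HasSum (fun i => ‖c i‖ ^ 2 * ‖φ i‖ ^ 2) (‖∑' i, c i • φ i‖ ^ 2) := by
  have hnorm : ∀ i, ‖c i • φ i‖ ^ 2 = ‖c i‖ ^ 2 * ‖φ i‖ ^ 2 := fun i => by
    rw [norm_smul, mul_pow]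
  have hsum : Summable fun i => ‖c i • φ i‖ ^ 2 :=
    (hc.mul_right B).of_nonneg_of_le (fun i => sq_nonneg _) fun i => by
      rw [hnorm]
      gcongr
      exact hB i
  have hv : Pairwise fun i j => inner 𝕜 (c i • φ i) (c j • φ j) = 0 := fun i j hij => by
    simp only [inner_smul_left, inner_smul_right, horth hij, mul_zero]
  simpa only [hnorm] using hasSum_norm_sq_of_pairwise_inner_eq_zero hv hsum

end InnerProductSpace

theorem IsKFrameWith.norm_sq_le {K : H →L[ℂ] H} {φ : ℕ → H} {A B : ℝ}
    (hφ : IsKFrameWith K φ A B) (k : ℕ) : ‖φ k‖ ^ 2 ≤ B :=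
  norm_sq_le_of_tsum_norm_inner_sq_le hφ.2.1.le k (hφ.2.2 (φ k)).1 (hφ.2.2 (φ k)).2.2

theorem stmt11_general
    (K : H →L[ℂ] H) (φ : ℕ → H) (A₁ B₁ : ℝ)
    (hφ : IsKFrameWith K φ A₁ B₁)
    (horth : ∀ j k : ℕ, j ≠ k → ⟪φ j, φ k⟫ = 0)
    (α : ℝ) (hα : 0 < α) (hnorm : ∀ j : ℕ, α < ‖φ j‖ ^ 2) :
    ∀ f : H,
      Real.sqrt (α * A₁) * ‖ContinuousLinearMap.adjoint K f‖ ≤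
        ‖∑' j : ℕ, ⟪f, φ j⟫ • φ j‖ := by
  intro f
  obtain ⟨hs, hlow, -⟩ := hφ.2.2 f
  have hpyth := hasSum_norm_sq_tsum_smul_of_pairwise_inner_eq_zero
    (fun j k hjk => horth j k hjk) hφ.norm_sq_le hs
  have hsq : α * A₁ * ‖ContinuousLinearMap.adjoint K f‖ ^ 2 ≤ ‖∑' j, ⟪f, φ j⟫ • φ j‖ ^ 2 :=
    calc α * A₁ * ‖ContinuousLinearMap.adjoint K f‖ ^ 2
        = α * (A₁ * ‖ContinuousLinearMap.adjoint K f‖ ^ 2) := by ring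
      _ ≤ α * ∑' j, ‖⟪f, φ j⟫‖ ^ 2 := by gcongr
      _ = ∑' j, α * ‖⟪f, φ j⟫‖ ^ 2 := hs.tsum_mul_left α |>.symm
      _ ≤ ∑' j, ‖⟪f, φ j⟫‖ ^ 2 * ‖φ j‖ ^ 2 :=
          (hs.mul_left α).tsum_le_tsum (fun j => by rw [mul_comm]; gcongr; exact (hnorm j).le)
            hpyth.summable
      _ = ‖∑' j, ⟪f, φ j⟫ • φ j‖ ^ 2 := hpyth.tsum_eq
  calc Real.sqrt (α * A₁) * ‖ContinuousLinearMap.adjoint K f‖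
      = Real.sqrt (α * A₁ * ‖ContinuousLinearMap.adjoint K f‖ ^ 2) := by
        rw [Real.sqrt_mul' _ (sq_nonneg _), Real.sqrt_sq (norm_nonneg _)]
    _ ≤ Real.sqrt (‖∑' j, ⟪f, φ j⟫ • φ j‖ ^ 2) := Real.sqrt_le_sqrt hsq
    _ = ‖∑' j, ⟪f, φ j⟫ • φ j‖ := Real.sqrt_sq (norm_nonneg _)

theorem stmt11 [TopologicalSpace.SeparableSpace H]
    (K : H →L[ℂ] H) (φ : ℕ → H) (A₁ B₁ : ℝ)
    (hφ : IsKFrameWith K φ A₁ B₁)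
    (horth : ∀ j k : ℕ, j ≠ k → ⟪φ j, φ k⟫ = 0)
    (α : ℝ) (hα : 0 < α) (hnorm : ∀ j : ℕ, α < ‖φ j‖ ^ 2) :
    ∀ f : H,
      Real.sqrt (α * A₁) * ‖ContinuousLinearMap.adjoint K f‖ ≤
        ‖∑' j : ℕ, ⟪f, φ j⟫ • φ j‖ :=
  stmt11_general K φ A₁ B₁ hφ horth α hα hnorm
end
end

section
/- Let K : H → H be a bounded linear operator with closed range, and let K̃* denote the restriction of K* to N(K*)^⊥, an invertible map onto R(K*) with bounded inverse. Suppose Φ₁ = {φ_{1j}}_{j∈ℕ} and Φ₂ = {φ_{2j}}_{j∈ℕ} are K-frames for H with bounds A₁, B₁ and A₂, B₂ respectively, the vectors of Φ₁ are pairwise orthogonal with ‖φ_{1j}‖² > α > 0 for all j, and there exist λ, μ, ν ≥ 0 with ‖∑_{j∈ℕ} a_j(φ_{1j} − φ_{2j})‖ ≤ λ‖{a_j}‖_{ℓ²} + μ‖∑_{j∈ℕ} a_j φ_{1j}‖ + ν‖∑_{j∈ℕ} a_j φ_{2j}‖ for all {a_j}_{j∈ℕ} ∈ ℓ²(ℕ).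 Then for every subset σ ⊆ ℕ and every f ∈ N(K*)^⊥, ‖∑_{j∈σ} ⟨f, φ_{1j}⟩ φ_{1j} + ∑_{j∈σᶜ} ⟨f, φ_{2j}⟩ φ_{2j}‖ ≥ [√(αA₁) − (√B₁ + √B₂)(λ + μ√B₁ + ν√B₂)‖(K̃*)⁻¹‖] ‖K* f‖. -/
/-!
With `b j = ⟪f, φ₁ j⟫`, the vector in question is `T - R`, where `T = ∑ j, b j • φ₁ j` and `R` is the
sum of `⟪f, φ₁ j⟫ • φ₁ j - ⟪f, φ₂ j⟫ • φ₂ j` over `σᶜ`. Orthogonality of `φ₁` gives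
`‖T‖² = ∑ j, ‖b j‖² ‖φ₁ j‖² ≥ α A₁ ‖K* f‖²`. An upper bound `B` of a Bessel sequence bounds its
synthesis map on `ℓ²` by `√B`, so the perturbation hypothesis bounds the synthesis map of `φ₁ - φ₂`
by `C = λ + μ √B₁ + ν √B₂`, and by duality `φ₁ - φ₂` is a Bessel sequence with bound `C²`. Splitting
each term of `R` as `⟪f, φ₁ j⟫ • (φ₁ j - φ₂ j) + ⟪f, φ₁ j - φ₂ j⟫ • φ₂ j` then gives
`‖R‖ ≤ (√B₁ + √B₂) C ‖f‖ ≤ (√B₁ + √B₂) C c ‖K* f‖`.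
-/

local notation "⟪" x ", " y "⟫" => @inner ℂ _ _ x y

noncomputable section

variable {H : Type} [NormedAddCommGroup H] [InnerProductSpace ℂ H] [CompleteSpace H]

section Bessel

variable {𝕜 : Type*} [RCLike 𝕜] {E : Type*} [NormedAddCommGroup E] [InnerProductSpace 𝕜 E]
  {ι : Type*}

variable (𝕜) in
def IsBesselWith (φ : ι → E) (B : ℝ) : Prop :=
  ∀ f : E, Summable (fun j => ‖inner 𝕜 f (φ j)‖ ^ 2) ∧ ∑' j, ‖inner 𝕜 f (φ j)‖ ^ 2 ≤ B * ‖f‖ ^ 2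

variable {φ : ι → E} {B : ℝ}

theorem IsBesselWith.indicator (hφ : IsBesselWith 𝕜 φ B) (s : Set ι) :
    IsBesselWith 𝕜 (s.indicator φ) B := by
  intro f
  have hle : ∀ j, ‖inner 𝕜 f (s.indicator φ j)‖ ^ 2 ≤ ‖inner 𝕜 f (φ j)‖ ^ 2 := by
    intro j
    by_cases hj : j ∈ s <;> simp [hj]
  have hsum := (hφ f).1.of_nonneg_of_le (fun j => sq_nonneg _) hle
  exact ⟨hsum, (hsum.tsum_le_tsum hle (hφ f).1).trans (hφ f).2⟩

theorem IsBesselWith.norm_sum_smul_le (hφ : IsBesselWith 𝕜 φ B) (a : ι → 𝕜) (s : Finset ι) :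
    ‖∑ j ∈ s, a j • φ j‖ ≤ √B * √(∑ j ∈ s, ‖a j‖ ^ 2) := by
  set g := ∑ j ∈ s, a j • φ j with hg
  have hcoef : √(∑ j ∈ s, ‖inner 𝕜 g (φ j)‖ ^ 2) ≤ √B * ‖g‖ := by
    rw [← Real.sqrt_sq (norm_nonneg g), ← Real.sqrt_mul' _ (sq_nonneg _)]
    exact Real.sqrt_le_sqrt (((hφ g).1.sum_le_tsum s fun j _ => sq_nonneg _).trans (hφ g).2)
  have hg_sq : ‖g‖ ^ 2 ≤ √(∑ j ∈ s, ‖a j‖ ^ 2) * (√B * ‖g‖) := calc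
    ‖g‖ ^ 2 = ‖inner 𝕜 g (∑ j ∈ s, a j • φ j)‖ := by
      rw [← hg, inner_self_eq_norm_sq_to_K]; simp
    _ = ‖∑ j ∈ s, a j * inner 𝕜 g (φ j)‖ := by simp only [inner_sum, inner_smul_right]
    _ ≤ ∑ j ∈ s, ‖a j‖ * ‖inner 𝕜 g (φ j)‖ := (norm_sum_le _ _).trans_eq (by simp only [norm_mul])
    _ ≤ √(∑ j ∈ s, ‖a j‖ ^ 2) * √(∑ j ∈ s, ‖inner 𝕜 g (φ j)‖ ^ 2) :=
      Real.sum_mul_le_sqrt_mul_sqrt _ _ _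
    _ ≤ √(∑ j ∈ s, ‖a j‖ ^ 2) * (√B * ‖g‖) := by gcongr
  rcases (norm_nonneg g).eq_or_lt with hg0 | hg0
  · rw [← hg0]; positivity
  · exact le_of_mul_le_mul_right (by nlinarith) hg0

theorem isBesselWith_sq_of_norm_tsum_smul_le {ψ : ι → E} {C : ℝ}
    (h : ∀ a : ι → 𝕜, (Summable fun j => ‖a j‖ ^ 2) →
      ‖∑' j, a j • ψ j‖ ≤ C * √(∑' j, ‖a j‖ ^ 2)) :
    IsBesselWith 𝕜 ψ (C ^ 2) := by
  intro f
  have hfin : ∀ s : Finset ι, ∑ j ∈ s, ‖inner 𝕜 f (ψ j)‖ ^ 2 ≤ C ^ 2 * ‖f‖ ^ 2 := by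
    classical
    intro s
    set S := ∑ j ∈ s, ‖inner 𝕜 f (ψ j)‖ ^ 2 with hS_def
    set a : ι → 𝕜 := fun j => if j ∈ s then starRingEnd 𝕜 (inner 𝕜 f (ψ j)) else 0
    have ha : ∀ j ∉ s, a j = 0 := fun j hj => if_neg hj
    have hnorm : ∑' j, ‖a j‖ ^ 2 = S := by
      rw [tsum_eq_sum fun j hj => by simp [ha j hj]]
      exact Finset.sum_congr rfl fun j hj => by simp [a, hj, norm_inner_symm]
    have hinner : inner 𝕜 f (∑' j, a j • ψ j) = (S : 𝕜) := by
      rw [tsum_eq_sum fun j hj => by simp [ha j hj], inner_sum, hS_def]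
      push_cast
      exact Finset.sum_congr rfl fun j hj => by
        simp only [a, if_pos hj, inner_smul_right, RCLike.conj_mul]
    have hS : S ≤ ‖f‖ * (C * √S) := calc
      S = ‖(S : 𝕜)‖ := by simp [abs_of_nonneg (show 0 ≤ S by positivity)]
      _ ≤ ‖f‖ * ‖∑' j, a j • ψ j‖ := hinner ▸ norm_inner_le_norm _ _
      _ ≤ ‖f‖ * (C * √S) := by
        rw [← hnorm]
        exact mul_le_mul_of_nonneg_left
          (h a (summable_of_ne_finset_zero (s := s) fun j hj => by simp [ha j hj])) (norm_nonneg f)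
    nlinarith [Real.sq_sqrt (show 0 ≤ S by positivity), Real.sqrt_nonneg S, sq_nonneg (C * ‖f‖ - √S)]
  have hsum := summable_of_sum_le (fun j => sq_nonneg _) hfin
  exact ⟨hsum, hsum.tsum_le_of_sum_le hfin⟩

variable [CompleteSpace E]

theorem IsBesselWith.summable_smul (hφ : IsBesselWith 𝕜 φ B) {a : ι → 𝕜}
    (ha : Summable fun j => ‖a j‖ ^ 2) : Summable fun j => a j • φ j := by
  rw [summable_iff_vanishing_norm]
  intro ε hε
  obtain ⟨s, hs⟩ := summable_iff_vanishing_norm.1 ha ((ε / (√B + 1)) ^ 2) (by positivity)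
  refine ⟨s, fun t ht => (hφ.norm_sum_smul_le a t).trans_lt ?_⟩
  have htail : √(∑ j ∈ t, ‖a j‖ ^ 2) < ε / (√B + 1) := by
    rw [Real.sqrt_lt' (by positivity)]
    exact (le_abs_self _).trans_lt (hs t ht)
  calc √B * √(∑ j ∈ t, ‖a j‖ ^ 2) ≤ (√B + 1) * √(∑ j ∈ t, ‖a j‖ ^ 2) := by gcongr; linarith
    _ < (√B + 1) * (ε / (√B + 1)) := by gcongr
    _ = ε := by field_simp

theorem IsBesselWith.norm_tsum_smul_le (hφ : IsBesselWith 𝕜 φ B) {a : ι → 𝕜}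
    (ha : Summable fun j => ‖a j‖ ^ 2) : ‖∑' j, a j • φ j‖ ≤ √B * √(∑' j, ‖a j‖ ^ 2) :=
  le_of_tendsto' (hφ.summable_smul ha).hasSum.norm fun s =>
    (hφ.norm_sum_smul_le a s).trans (by gcongr; exact ha.sum_le_tsum s fun j _ => sq_nonneg _)

theorem norm_tsum_smul_sub_le_of_perturbation {φ₁ φ₂ : ι → E} {B₁ B₂ lam mu nu : ℝ}
    (hφ₁ : IsBesselWith 𝕜 φ₁ B₁) (hφ₂ : IsBesselWith 𝕜 φ₂ B₂) (hmu : 0 ≤ mu) (hnu : 0 ≤ nu)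
    (hperturb : ∀ a : lp (fun _ : ι => 𝕜) 2,
      ‖∑' j, a j • (φ₁ j - φ₂ j)‖ ≤
        lam * ‖a‖ + mu * ‖∑' j, a j • φ₁ j‖ + nu * ‖∑' j, a j • φ₂ j‖)
    {a : ι → 𝕜} (ha : Summable fun j => ‖a j‖ ^ 2) :
    ‖∑' j, a j • (φ₁ j - φ₂ j)‖ ≤ (lam + mu * √B₁ + nu * √B₂) * √(∑' j, ‖a j‖ ^ 2) := by
  have h := hperturb ⟨a, (memℓp_gen_iff (by norm_num)).2 (by simpa using ha)⟩
  rw [lp.norm_eq_tsum_rpow (by norm_num)] at h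
  simp only [ENNReal.toReal_ofNat, Real.rpow_two, ← Real.sqrt_eq_rpow] at h
  calc ‖∑' j, a j • (φ₁ j - φ₂ j)‖
      ≤ lam * √(∑' j, ‖a j‖ ^ 2) + mu * ‖∑' j, a j • φ₁ j‖ + nu * ‖∑' j, a j • φ₂ j‖ := h
    _ ≤ lam * √(∑' j, ‖a j‖ ^ 2) + mu * (√B₁ * √(∑' j, ‖a j‖ ^ 2)) +
          nu * (√B₂ * √(∑' j, ‖a j‖ ^ 2)) := by
      gcongr
      exacts [hφ₁.norm_tsum_smul_le ha, hφ₂.norm_tsum_smul_le ha]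
    _ = (lam + mu * √B₁ + nu * √B₂) * √(∑' j, ‖a j‖ ^ 2) := by ring

theorem norm_tsum_indicator_sub_le {φ₁ φ₂ : ι → E} {B₁ B₂ C : ℝ}
    (hφ₁ : IsBesselWith 𝕜 φ₁ B₁) (hφ₂ : IsBesselWith 𝕜 φ₂ B₂) (hC : 0 ≤ C)
    (hpert : ∀ a : ι → 𝕜, (Summable fun j => ‖a j‖ ^ 2) →
      ‖∑' j, a j • (φ₁ j - φ₂ j)‖ ≤ C * √(∑' j, ‖a j‖ ^ 2))
    (s : Set ι) (f : E) :
    ‖∑' j, s.indicator (fun j => inner 𝕜 f (φ₁ j) • φ₁ j - inner 𝕜 f (φ₂ j) • φ₂ j) j‖ ≤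
      (√B₁ + √B₂) * C * ‖f‖ := by
  set a := fun j => inner 𝕜 f (s.indicator φ₁ j)
  set w := fun j => inner 𝕜 f (s.indicator (fun j => φ₁ j - φ₂ j) j)
  have ha := (hφ₁.indicator s) f
  have hw := ((isBesselWith_sq_of_norm_tsum_smul_le hpert).indicator s) f
  have hsplit : ∀ j, s.indicator (fun j => inner 𝕜 f (φ₁ j) • φ₁ j - inner 𝕜 f (φ₂ j) • φ₂ j) j =
      a j • (φ₁ j - φ₂ j) + w j • φ₂ j := by
    intro j
    by_cases hj : j ∈ s
    · simp only [a, w, Set.indicator_of_mem hj, inner_sub_right, smul_sub, sub_smul]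
      abel
    · simp [a, w, Set.indicator_of_notMem hj]
  have hsa : Summable fun j => a j • (φ₁ j - φ₂ j) := by
    simpa only [smul_sub] using (hφ₁.summable_smul ha.1).sub (hφ₂.summable_smul ha.1)
  calc _ = ‖∑' j, a j • (φ₁ j - φ₂ j) + ∑' j, w j • φ₂ j‖ := by
        rw [tsum_congr hsplit, hsa.tsum_add (hφ₂.summable_smul hw.1)]
    _ ≤ C * √(B₁ * ‖f‖ ^ 2) + √B₂ * √(C ^ 2 * ‖f‖ ^ 2) := by
        refine (norm_add_le _ _).trans (add_le_add ?_ ?_)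
        · exact (hpert a ha.1).trans (by gcongr; exact ha.2)
        · exact (hφ₂.norm_tsum_smul_le hw.1).trans (by gcongr; exact hw.2)
    _ = (√B₁ + √B₂) * C * ‖f‖ := by
        rw [Real.sqrt_mul' _ (sq_nonneg _), Real.sqrt_sq (norm_nonneg f), ← mul_pow,
          Real.sqrt_sq (by positivity)]
        ring

end Bessel

theorem tsum_subtype_add_tsum_subtype_compl {ι E : Type*} [NormedAddCommGroup E] [CompleteSpace E]
    {u v : ι → E} (hu : Summable u) (hv : Summable v) (s : Set ι) :
    ∑' j : s, u j + ∑' j : ↥sᶜ, v j = ∑' j, u j - ∑' j, sᶜ.indicator (fun j => u j - v j) j := by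
  have hsplit : ∑' j, s.indicator u j + ∑' j, sᶜ.indicator u j = ∑' j, u j := by
    rw [← (hu.indicator s).tsum_add (hu.indicator sᶜ)]
    exact tsum_congr (congrFun (Set.indicator_self_add_compl s u))
  rw [tsum_subtype, tsum_subtype, Set.indicator_sub,
    (hu.indicator sᶜ).tsum_sub (hv.indicator sᶜ), ← hsplit]
  abel

section Orthogonal

variable {𝕜 : Type*} [RCLike 𝕜] {E : Type*} [NormedAddCommGroup E] [InnerProductSpace 𝕜 E]
  {ι : Type*} {φ : ι → E} {b : ι → 𝕜}

theorem hasSum_norm_sq_mul_norm_sq_of_pairwise_inner_eq_zero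
    (horth : Pairwise fun j k => inner 𝕜 (φ j) (φ k) = 0) (hbφ : Summable fun j => b j • φ j) :
    HasSum (fun j => ‖b j‖ ^ 2 * ‖φ j‖ ^ 2) (‖∑' j, b j • φ j‖ ^ 2) := by
  set T := ∑' j, b j • φ j
  have hcoef : ∀ k, inner 𝕜 (φ k) T = b k * (‖φ k‖ : 𝕜) ^ 2 := by
    intro k
    rw [← innerSL_apply_apply, (innerSL 𝕜 (φ k)).map_tsum hbφ,
      tsum_eq_single k fun j hj => by simp [horth hj.symm]]
    simp [inner_self_eq_norm_sq_to_K]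
  have hterm : ∀ k, inner 𝕜 T (b k • φ k) = ((‖b k‖ ^ 2 * ‖φ k‖ ^ 2 : ℝ) : 𝕜) := by
    intro k
    rw [inner_smul_right, ← inner_conj_symm, hcoef, map_mul, ← mul_assoc, RCLike.mul_conj]
    simp
  have hT : HasSum (fun k => inner 𝕜 T (b k • φ k)) (inner 𝕜 T T) :=
    (innerSL 𝕜 T).hasSum hbφ.hasSum
  simp only [hterm, inner_self_eq_norm_sq_to_K, ← RCLike.ofReal_pow] at hT
  exact_mod_cast (RCLike.hasSum_ofReal 𝕜).1 hT

theorem mul_tsum_norm_sq_le_norm_tsum_smul_sq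
    (horth : Pairwise fun j k => inner 𝕜 (φ j) (φ k) = 0) {α : ℝ} (hα : ∀ j, α ≤ ‖φ j‖ ^ 2)
    (hb : Summable fun j => ‖b j‖ ^ 2) (hbφ : Summable fun j => b j • φ j) :
    α * ∑' j, ‖b j‖ ^ 2 ≤ ‖∑' j, b j • φ j‖ ^ 2 := by
  rw [← tsum_mul_left]
  refine hasSum_le (fun j => ?_) (hb.mul_left α).hasSum
    (hasSum_norm_sq_mul_norm_sq_of_pairwise_inner_eq_zero horth hbφ)
  rw [mul_comm]
  exact mul_le_mul_of_nonneg_left (hα j) (sq_nonneg _)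

end Orthogonal

namespace IsKFrameWith

variable {K : H →L[ℂ] H} {φ : ℕ → H} {A B : ℝ}

theorem isBesselWith (hφ : IsKFrameWith K φ A B) : IsBesselWith ℂ φ B :=
  fun f => ⟨(hφ.2.2 f).1, (hφ.2.2 f).2.2⟩

theorem sqrt_mul_norm_adjoint_le_norm_tsum (hφ : IsKFrameWith K φ A B)
    (horth : Pairwise fun j k => ⟪φ j, φ k⟫ = 0) {α : ℝ} (hα₀ : 0 ≤ α)
    (hα : ∀ j, α ≤ ‖φ j‖ ^ 2) (f : H) :
    √(α * A) * ‖ContinuousLinearMap.adjoint K f‖ ≤ ‖∑' j, ⟪f, φ j⟫ • φ j‖ := by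
  obtain ⟨hsum, hlower, -⟩ := hφ.2.2 f
  refine le_of_pow_le_pow_left₀ two_ne_zero (norm_nonneg _) ?_
  calc (√(α * A) * ‖ContinuousLinearMap.adjoint K f‖) ^ 2
      = α * (A * ‖ContinuousLinearMap.adjoint K f‖ ^ 2) := by
        rw [mul_pow, Real.sq_sqrt (mul_nonneg hα₀ hφ.1.le), mul_assoc]
    _ ≤ α * ∑' j, ‖⟪f, φ j⟫‖ ^ 2 := mul_le_mul_of_nonneg_left hlower hα₀
    _ ≤ ‖∑' j, ⟪f, φ j⟫ • φ j‖ ^ 2 :=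
      mul_tsum_norm_sq_le_norm_tsum_smul_sq horth hα hsum (hφ.isBesselWith.summable_smul hsum)

end IsKFrameWith

theorem stmt16_general
    (K : H →L[ℂ] H)
    (φ₁ φ₂ : ℕ → H) (A₁ B₁ A₂ B₂ : ℝ)
    (hφ₁ : IsKFrameWith K φ₁ A₁ B₁) (hφ₂ : IsKFrameWith K φ₂ A₂ B₂)
    (horth : ∀ j k : ℕ, j ≠ k → ⟪φ₁ j, φ₁ k⟫ = 0)
    (α : ℝ) (hα : 0 < α) (hnorm : ∀ j : ℕ, α < ‖φ₁ j‖ ^ 2)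
    -- c models ‖(K̃*)⁻¹‖, the norm of the inverse of the restriction of K* to N(K*)^⊥
    (c : ℝ)
    (hc : ∀ f ∈ (LinearMap.ker (ContinuousLinearMap.adjoint K : H →ₗ[ℂ] H))ᗮ,
      ‖f‖ ≤ c * ‖ContinuousLinearMap.adjoint K f‖)
    (lam mu nu : ℝ) (hlam : 0 ≤ lam) (hmu : 0 ≤ mu) (hnu : 0 ≤ nu)
    (hperturb : ∀ a : lp (fun _ : ℕ => ℂ) 2,
      ‖∑' j : ℕ, a j • (φ₁ j - φ₂ j)‖ ≤
        lam * ‖a‖ + mu * ‖∑' j : ℕ, a j • φ₁ j‖ + nu * ‖∑' j : ℕ, a j • φ₂ j‖) :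
    ∀ σ : Set ℕ, ∀ f ∈ (LinearMap.ker (ContinuousLinearMap.adjoint K : H →ₗ[ℂ] H))ᗮ,
      (Real.sqrt (α * A₁) - (Real.sqrt B₁ + Real.sqrt B₂) *
          (lam + mu * Real.sqrt B₁ + nu * Real.sqrt B₂) * c) *
          ‖ContinuousLinearMap.adjoint K f‖ ≤
        ‖(∑' j : σ, ⟪f, φ₁ (j : ℕ)⟫ • φ₁ (j : ℕ)) +
          ∑' j : ↥σᶜ, ⟪f, φ₂ (j : ℕ)⟫ • φ₂ (j : ℕ)‖ := by
  intro σ f hf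
  have hB₁ := hφ₁.isBesselWith
  have hB₂ := hφ₂.isBesselWith
  have hT := hφ₁.sqrt_mul_norm_adjoint_le_norm_tsum horth hα.le (fun j => (hnorm j).le) f
  have hR := norm_tsum_indicator_sub_le hB₁ hB₂ (by positivity)
    (fun a ha => norm_tsum_smul_sub_le_of_perturbation hB₁ hB₂ hmu hnu hperturb ha) σᶜ f
  rw [tsum_subtype_add_tsum_subtype_compl (hB₁.summable_smul (hB₁ f).1)
    (hB₂.summable_smul (hB₂ f).1)]
  calc _ = √(α * A₁) * ‖ContinuousLinearMap.adjoint K f‖ -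
        (√B₁ + √B₂) * (lam + mu * √B₁ + nu * √B₂) * (c * ‖ContinuousLinearMap.adjoint K f‖) := by
        ring
    _ ≤ _ - _ := sub_le_sub hT (hR.trans (by gcongr; exact hc f hf))
    _ ≤ _ := norm_sub_norm_le _ _

theorem stmt16 [TopologicalSpace.SeparableSpace H]
    (K : H →L[ℂ] H) (hK : IsClosed (Set.range K))
    (φ₁ φ₂ : ℕ → H) (A₁ B₁ A₂ B₂ : ℝ)
    (hφ₁ : IsKFrameWith K φ₁ A₁ B₁) (hφ₂ : IsKFrameWith K φ₂ A₂ B₂)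
    (horth : ∀ j k : ℕ, j ≠ k → ⟪φ₁ j, φ₁ k⟫ = 0)
    (α : ℝ) (hα : 0 < α) (hnorm : ∀ j : ℕ, α < ‖φ₁ j‖ ^ 2)
    -- c models ‖(K̃*)⁻¹‖, the norm of the inverse of the restriction of K* to N(K*)^⊥
    (c : ℝ) (hc0 : 0 ≤ c)
    (hc : ∀ f ∈ (LinearMap.ker (ContinuousLinearMap.adjoint K : H →ₗ[ℂ] H))ᗮ,
      ‖f‖ ≤ c * ‖ContinuousLinearMap.adjoint K f‖)
    (lam mu nu : ℝ) (hlam : 0 ≤ lam) (hmu : 0 ≤ mu) (hnu : 0 ≤ nu)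
    (hperturb : ∀ a : lp (fun _ : ℕ => ℂ) 2,
      ‖∑' j : ℕ, a j • (φ₁ j - φ₂ j)‖ ≤
        lam * ‖a‖ + mu * ‖∑' j : ℕ, a j • φ₁ j‖ + nu * ‖∑' j : ℕ, a j • φ₂ j‖) :
    ∀ σ : Set ℕ, ∀ f ∈ (LinearMap.ker (ContinuousLinearMap.adjoint K : H →ₗ[ℂ] H))ᗮ,
      (Real.sqrt (α * A₁) - (Real.sqrt B₁ + Real.sqrt B₂) *
          (lam + mu * Real.sqrt B₁ + nu * Real.sqrt B₂) * c) *
          ‖ContinuousLinearMap.adjoint K f‖ ≤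
        ‖(∑' j : σ, ⟪f, φ₁ (j : ℕ)⟫ • φ₁ (j : ℕ)) +
          ∑' j : ↥σᶜ, ⟪f, φ₂ (j : ℕ)⟫ • φ₂ (j : ℕ)‖ :=
  stmt16_general K φ₁ φ₂ A₁ B₁ A₂ B₂ hφ₁ hφ₂ horth α hα hnorm c hc lam mu nu hlam hmu hnu hperturb
end
end
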